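/- Let k be a field of characteristic χ > 0 with algebraic closure K, let g, f_1,...,f_m ∈ k[t_1,...,t_n], let R be the range of the induced map f : K^n → K^m, and assume dim(closure of K^m \ R) ≤ m−2. If h : K^m → K satisfies h(f(a)) = g(a) for all a ∈ K^n, then there exist p ∈ k[x_1,...,x_m] and ν ∈ ℕ₀ such that h(b)^(χ^ν) = p(b) for all b ∈ R. -/

import Mathlib

/-!
Since `h ∘ f = g`, the polynomial `g(t) - g(s)` vanishes wherever `f(t) = f(s)`, so by the
Nullstellensatz it lies in the radical of the ideal generated by the `f_i(t) - f_i(s)`, and in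
characteristic `χ` some Frobenius power `G = g^(χ^ν)` lies in that ideal itself. In
`M ⊗[L] M`, where `M` is the field of rational functions and `L = K(f)`, this gives
`G ⊗ 1 = 1 ⊗ G`, hence `G ∈ L`: `G * B(f) = A(f)` for polynomials `A`, `B`.

Almost surjectivity removes the denominator one prime factor `q` of `B` at a time: `q` involves
some variable `x_i`, and there is a nonzero `p` free of `x_i` vanishing off the range `R`. Then
`A * p` vanishes on the zeros of `q` (on `R` because `A(f) = G * B(f)`), so `q ∣ A * p`, and
`q ∤ p`. Finally a `k`-linear retraction `K → k`, applied to coefficients, descends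
`G = P(f)` from `K` to `k`.
-/

open MvPolynomial

/-- `p` vanishes at every point of `A`. -/
def VanishesOn {k : Type*} [CommSemiring k] {m : ℕ} (A : Set (Fin m → k))
    (p : MvPolynomial (Fin m) k) : Prop :=
  ∀ a ∈ A, eval a p = 0

/-- The Zariski closure of `A ⊆ k^m` has dimension at most `d` (with `dim ∅ = -1`):
for every index set `S` with more than `d` elements, the vanishing ideal of `A`
contains a nonzero polynomial supported on the variables in `S`. -/
def ZClosureDimLE {k : Type*} [CommSemiring k] {m : ℕ} (A : Set (Fin m → k)) (d : ℤ) : Prop :=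
  ∀ S : Finset (Fin m), d < (S.card : ℤ) →
    ∃ p : MvPolynomial (Fin m) k, p ≠ 0 ∧
      p ∈ MvPolynomial.supported k (↑S : Set (Fin m)) ∧ VanishesOn A p

/-- The range of the polynomial map `k^n → k^m` induced by `f`. -/
def polyRange {k : Type*} [CommSemiring k] {m n : ℕ}
    (f : Fin m → MvPolynomial (Fin n) k) : Set (Fin m → k) :=
  Set.range fun a : Fin n → k => fun i => eval a (f i)

/-- `f` is almost surjective on `k`: the Zariski closure of the complement of the range
of the induced map `k^n → k^m` has dimension at most `m - 2`. -/
def AlmostSurj {k : Type*} [CommSemiring k] {m n : ℕ}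
    (f : Fin m → MvPolynomial (Fin n) k) : Prop :=
  ZClosureDimLE (polyRange f)ᶜ ((m : ℤ) - 2)

/-- `g` is determined by `f`. -/
def Determined {k : Type*} [CommSemiring k] {m n : ℕ}
    (f : Fin m → MvPolynomial (Fin n) k) (g : MvPolynomial (Fin n) k) : Prop :=
  ∀ a b : Fin n → k, (∀ i, eval a (f i) = eval b (f i)) → eval a g = eval b g


theorem Subalgebra.mem_bot_of_tmul_one_eq_one_tmul {L M : Type*} [Field L] [Ring M] [Algebra L M]
    [Nontrivial M] {x : M} (h : x ⊗ₜ[L] (1 : M) = 1 ⊗ₜ[L] x) : x ∈ (⊥ : Subalgebra L M) := by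
  obtain ⟨ψ, hψ⟩ := Module.Projective.exists_dual_eq_one L (one_ne_zero : (1 : M) ≠ 0)
  have hx := congrArg (TensorProduct.rid L M ∘ TensorProduct.map LinearMap.id ψ) h
  simp only [Function.comp_apply, TensorProduct.map_tmul, LinearMap.id_coe, id_eq, hψ,
    TensorProduct.rid_tmul, one_smul] at hx
  exact Algebra.mem_bot.mpr ⟨ψ x, by rw [Algebra.algebraMap_eq_smul_one, ← hx]⟩

theorem Ideal.exists_pow_char_pow_sub_mem_of_sub_mem_radical {R : Type*} [CommRing R]
    {p : ℕ} [Fact p.Prime] [CharP R p] {I : Ideal R} {x y : R} (h : x - y ∈ I.radical) :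
    ∃ N, x ^ p ^ N - y ^ p ^ N ∈ I := by
  obtain ⟨N, hN⟩ := h
  refine ⟨N, ?_⟩
  rw [← sub_pow_char_pow, ← Nat.sub_add_cancel (Nat.lt_pow_self (Fact.out : p.Prime).one_lt).le,
    pow_add]
  exact I.mul_mem_left _ hN

namespace MvPolynomial

variable {K σ ι : Type*}

theorem eval_aeval [CommSemiring K] (F : ι → MvPolynomial σ K) (u : MvPolynomial ι K)
    (a : σ → K) : eval a (aeval F u) = eval (fun i => eval a (F i)) u := by
  simp only [aeval_eq_bind₁, eval₂Hom_bind₁, eval]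

noncomputable def kernelPairIdeal [CommRing K] (F : ι → MvPolynomial σ K) :
    Ideal (MvPolynomial (σ ⊕ σ) K) :=
  Ideal.span (Set.range fun i => rename Sum.inl (F i) - rename Sum.inr (F i))

theorem sub_rename_mem_radical_kernelPairIdeal [Field K] [IsAlgClosed K] [Finite σ]
    (F : ι → MvPolynomial σ K) (G : MvPolynomial σ K)
    (hG : ∀ a b : σ → K, (∀ i, eval a (F i) = eval b (F i)) → eval a G = eval b G) :
    rename Sum.inl G - rename Sum.inr G ∈ (kernelPairIdeal F).radical := by
  rw [← vanishingIdeal_zeroLocus_eq_radical (K := K), mem_vanishingIdeal_iff]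
  intro x hx
  have hF : ∀ i, eval (x ∘ Sum.inl) (F i) = eval (x ∘ Sum.inr) (F i) := fun i => by
    have := hx _ (Ideal.subset_span ⟨i, rfl⟩)
    rwa [map_sub, aeval_rename, aeval_rename, sub_eq_zero] at this
  rw [map_sub, aeval_rename, aeval_rename, sub_eq_zero]
  exact hG _ _ hF

theorem algebraMap_mem_adjoin_of_mem_kernelPairIdeal [Field K] (F : ι → MvPolynomial σ K)
    (G : MvPolynomial σ K) (hG : rename Sum.inl G - rename Sum.inr G ∈ kernelPairIdeal F) :
    algebraMap _ (FractionRing (MvPolynomial σ K)) G ∈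
      IntermediateField.adjoin K (Set.range fun i => algebraMap _ _ (F i)) := by
  set M := FractionRing (MvPolynomial σ K)
  set ιM : MvPolynomial σ K →ₐ[K] M := IsScalarTower.toAlgHom K _ M
  set L := IntermediateField.adjoin K (Set.range fun i => algebraMap _ M (F i))
  have tmul_comm : ∀ y ∈ L, y ⊗ₜ[L] (1 : M) = 1 ⊗ₜ[L] y := fun y hy => by
    have hy1 : (⟨y, hy⟩ : L) • (1 : M) = y := by rw [Algebra.smul_def, mul_one]; rfl
    simpa only [hy1] using TensorProduct.smul_tmul (R := L) (⟨y, hy⟩ : L) (1 : M) (1 : M)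
  set τ : MvPolynomial (σ ⊕ σ) K →ₐ[K] TensorProduct L M M :=
    aeval (Sum.elim (fun j => ιM (X j) ⊗ₜ 1) (fun j => 1 ⊗ₜ ιM (X j)))
  have hτl : ∀ u, τ (rename Sum.inl u) = ιM u ⊗ₜ 1 := fun u =>
    congrArg (· u) (show τ.comp (rename Sum.inl) =
      (Algebra.TensorProduct.includeLeft (S := K)).comp ιM from algHom_ext fun j => by simp [τ])
  have hτr : ∀ u, τ (rename Sum.inr u) = 1 ⊗ₜ ιM u := fun u =>
    congrArg (· u) (show τ.comp (rename Sum.inr) =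
      ((Algebra.TensorProduct.includeRight).restrictScalars K).comp ιM from
        algHom_ext fun j => by simp [τ])
  have hker : kernelPairIdeal F ≤ RingHom.ker τ := by
    rw [kernelPairIdeal, Ideal.span_le]
    rintro _ ⟨i, rfl⟩
    rw [SetLike.mem_coe, RingHom.mem_ker, map_sub, hτl, hτr,
      tmul_comm (ιM (F i)) (IntermediateField.subset_adjoin K _ ⟨i, rfl⟩), sub_self]
  have hGτ := hker hG
  rw [RingHom.mem_ker, map_sub, hτl, hτr, sub_eq_zero] at hGτ
  obtain ⟨y, hy⟩ := Algebra.mem_bot.mp (Subalgebra.mem_bot_of_tmul_one_eq_one_tmul hGτ)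
  exact hy ▸ y.2

theorem exists_mul_aeval_eq_aeval_of_algebraMap_mem_adjoin [Field K] (F : ι → MvPolynomial σ K)
    (G : MvPolynomial σ K)
    (hG : algebraMap _ (FractionRing (MvPolynomial σ K)) G ∈
      IntermediateField.adjoin K (Set.range fun i => algebraMap _ _ (F i))) :
    ∃ A B : MvPolynomial ι K, aeval F B ≠ 0 ∧ G * aeval F B = aeval F A := by
  set M := FractionRing (MvPolynomial σ K)
  have hinj := IsFractionRing.injective (MvPolynomial σ K) M
  have hcomp : ∀ u, aeval (fun i => algebraMap _ M (F i)) u = algebraMap _ M (aeval F u) :=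
    fun u => (comp_aeval_apply F (IsScalarTower.toAlgHom K _ M) u).symm
  obtain ⟨A, B, hAB⟩ := (IntermediateField.mem_adjoin_range_iff K _ _).mp hG
  rw [hcomp, hcomp] at hAB
  by_cases hB : aeval F B = 0
  · refine ⟨0, 1, by simp, ?_⟩
    rw [hB, map_zero, div_zero, ← map_zero (algebraMap (MvPolynomial σ K) M)] at hAB
    rw [hinj hAB, zero_mul, map_zero]
  · refine ⟨A, B, hB, hinj ?_⟩
    rw [map_mul, hAB, div_mul_cancel₀ _ ((map_ne_zero_iff _ hinj).mpr hB)]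

theorem exists_pow_char_pow_mul_aeval_eq_aeval [Field K] [IsAlgClosed K] [Finite σ] (p : ℕ)
    [Fact p.Prime] [CharP K p] (F : ι → MvPolynomial σ K) (G : MvPolynomial σ K)
    (hG : ∀ a b : σ → K, (∀ i, eval a (F i) = eval b (F i)) → eval a G = eval b G) :
    ∃ (ν : ℕ) (A B : MvPolynomial ι K), aeval F B ≠ 0 ∧ G ^ p ^ ν * aeval F B = aeval F A := by
  obtain ⟨ν, hν⟩ := Ideal.exists_pow_char_pow_sub_mem_of_sub_mem_radical (p := p)
    (sub_rename_mem_radical_kernelPairIdeal F G hG)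
  rw [← map_pow, ← map_pow] at hν
  exact ⟨ν, exists_mul_aeval_eq_aeval_of_algebraMap_mem_adjoin F _
    (algebraMap_mem_adjoin_of_mem_kernelPairIdeal F _ hν)⟩

theorem dvd_of_forall_eval_eq_zero_of_prime [Field K] [IsAlgClosed K] [Finite σ]
    {q r : MvPolynomial σ K} (hq : Prime q) (h : ∀ b, eval b q = 0 → eval b r = 0) :
    q ∣ r := by
  have hr : r ∈ (Ideal.span {q}).radical := by
    rw [← vanishingIdeal_zeroLocus_eq_radical (K := K)]
    exact fun b hb => h b (hb q (Ideal.subset_span rfl))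
  obtain ⟨e, he⟩ := hr
  exact hq.dvd_of_dvd_pow (Ideal.mem_span_singleton.mp he)

theorem not_dvd_of_mem_vars_of_mem_supported {R : Type*} [CommSemiring R] [NoZeroDivisors R]
    {q p : MvPolynomial σ R} {i : σ} (hq : i ∈ q.vars) (hp : p ≠ 0)
    (hpi : p ∈ supported R {i}ᶜ) : ¬ q ∣ p := by
  rintro ⟨r, rfl⟩
  have hi : i ∉ (q * r).vars := fun h => mem_supported.mp hpi h rfl
  rw [mem_vars_iff_degreeOf_ne_zero, not_not,
    degreeOf_mul_eq (left_ne_zero_of_mul hp) (right_ne_zero_of_mul hp)] at hi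
  exact mem_vars_iff_degreeOf_ne_zero.mp hq (by omega)

theorem exists_mem_vars_of_not_isUnit [Field K] {q : MvPolynomial σ K} (hq0 : q ≠ 0)
    (hq : ¬IsUnit q) : ∃ i, i ∈ q.vars := by
  by_contra! h
  have hC := vars_eq_empty_iff_eq_C.mp (Finset.eq_empty_of_forall_notMem h)
  rw [hC, Ne, C_eq_zero] at hq0
  exact hq (hC ▸ (isUnit_iff_ne_zero.mpr hq0).map C)

theorem exists_coeff_aeval_eq_apply_coeff_aeval_map {k : Type*} [CommRing k] [CommRing K]
    [Algebra k K] (π : K →ₗ[k] k) (f : ι → MvPolynomial σ k) (P : MvPolynomial ι K) :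
    ∃ p : MvPolynomial ι k, ∀ μ, coeff μ (aeval f p)
      = π (coeff μ (aeval (fun i => map (algebraMap k K) (f i)) P)) := by
  induction P using MvPolynomial.induction_on' with
  | monomial α c =>
    refine ⟨monomial α (π c), fun μ => ?_⟩
    have hF : (α.prod fun i e => map (algebraMap k K) (f i) ^ e)
        = map (algebraMap k K) (α.prod fun i e => f i ^ e) := by
      simp only [map_finsuppProd, map_pow]
    rw [aeval_monomial, aeval_monomial, hF, algebraMap_eq, algebraMap_eq, coeff_C_mul,
      coeff_C_mul, coeff_map, mul_comm c, ← Algebra.smul_def, map_smul, smul_eq_mul, mul_comm]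
  | add P Q hP hQ =>
    obtain ⟨p, hp⟩ := hP
    obtain ⟨q, hq⟩ := hQ
    exact ⟨p + q, fun μ => by simp only [map_add, coeff_add, hp, hq]⟩

theorem exists_aeval_eq_of_map_eq_aeval_map {k : Type*} [Field k] [CommRing K] [Nontrivial K]
    [Algebra k K] (f : ι → MvPolynomial σ k) (G : MvPolynomial σ k) (P : MvPolynomial ι K)
    (hP : aeval (fun i => map (algebraMap k K) (f i)) P = map (algebraMap k K) G) :
    ∃ p : MvPolynomial ι k, aeval f p = G := by
  obtain ⟨π, hπ⟩ := (Algebra.linearMap k K).exists_leftInverse_of_injective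
    (LinearMap.ker_eq_bot.mpr (FaithfulSMul.algebraMap_injective k K))
  obtain ⟨p, hp⟩ := exists_coeff_aeval_eq_apply_coeff_aeval_map π f P
  refine ⟨p, MvPolynomial.ext _ _ fun μ => ?_⟩
  rw [hp, hP, coeff_map]
  exact LinearMap.congr_fun hπ (coeff μ G)

end MvPolynomial

namespace AlmostSurj

theorem exists_ne_zero_supported_vanishesOn {K : Type*} [CommSemiring K] {m n : ℕ}
    {F : Fin m → MvPolynomial (Fin n) K} (hF : AlmostSurj F) (i : Fin m) :
    ∃ p, p ≠ 0 ∧ p ∈ supported K {i}ᶜ ∧ VanishesOn (polyRange F)ᶜ p := by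
  obtain ⟨p, hp0, hpi, hpR⟩ := hF (Finset.univ.erase i) (by
    rw [Finset.card_erase_of_mem (Finset.mem_univ i), Finset.card_univ, Fintype.card_fin]
    have := i.pos
    omega)
  exact ⟨p, hp0, by simpa [Set.compl_eq_univ_sdiff] using hpi, hpR⟩

variable {K : Type*} [Field K] [IsAlgClosed K] {m n : ℕ} {F : Fin m → MvPolynomial (Fin n) K}

theorem prime_dvd_of_mul_aeval_eq (hF : AlmostSurj F) {G : MvPolynomial (Fin n) K}
    {A B q : MvPolynomial (Fin m) K} (hq : Prime q) (hqB : q ∣ B)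
    (hAB : G * aeval F B = aeval F A) : q ∣ A := by
  obtain ⟨i, hi⟩ := exists_mem_vars_of_not_isUnit hq.ne_zero hq.not_isUnit
  obtain ⟨p, hp0, hpi, hpR⟩ := hF.exists_ne_zero_supported_vanishesOn i
  have hAp : q ∣ A * p := dvd_of_forall_eval_eq_zero_of_prime hq fun b hb => by
    by_cases hbR : b ∈ polyRange F
    · obtain ⟨a, rfl⟩ := hbR
      obtain ⟨B', rfl⟩ := hqB
      rw [map_mul, ← eval_aeval, ← hAB, map_mul, map_mul, map_mul, eval_aeval, hb]
      ring
    · rw [map_mul, hpR b hbR, mul_zero]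
  exact (hq.dvd_or_dvd hAp).resolve_right (not_dvd_of_mem_vars_of_mem_supported hi hp0 hpi)

theorem exists_aeval_eq_of_mul_aeval_eq (hF : AlmostSurj F) {G : MvPolynomial (Fin n) K}
    {A B : MvPolynomial (Fin m) K} (hB : aeval F B ≠ 0) (hAB : G * aeval F B = aeval F A) :
    ∃ P : MvPolynomial (Fin m) K, aeval F P = G := by
  induction B using UniqueFactorizationMonoid.induction_on_prime generalizing A with
  | h₁ => simp at hB
  | h₂ u hu =>
    refine ⟨A * ↑hu.unit⁻¹, ?_⟩
    rw [map_mul, ← hAB, mul_assoc, ← map_mul, hu.mul_val_inv, map_one, mul_one]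
  | h₃ B q _ hq ih =>
    obtain ⟨A', rfl⟩ := hF.prime_dvd_of_mul_aeval_eq hq (dvd_mul_right q B) hAB
    rw [map_mul] at hB
    rw [map_mul, map_mul, mul_left_comm] at hAB
    exact ih (right_ne_zero_of_mul hB) (mul_left_cancel₀ (left_ne_zero_of_mul hB) hAB)

end AlmostSurj

theorem stmt16 {k : Type*} [Field k] (χ : ℕ) [CharP k χ] (hχ : 0 < χ) {m n : ℕ}
    (f : Fin m → MvPolynomial (Fin n) k) (g : MvPolynomial (Fin n) k)
    (R : Set (Fin m → AlgebraicClosure k))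
    (hR : R = polyRange fun i =>
      MvPolynomial.map (algebraMap k (AlgebraicClosure k)) (f i))
    (hAS : ZClosureDimLE Rᶜ ((m : ℤ) - 2))
    (h : (Fin m → AlgebraicClosure k) → AlgebraicClosure k)
    (hcomp : ∀ a : Fin n → AlgebraicClosure k,
      h (fun i => eval a (MvPolynomial.map (algebraMap k (AlgebraicClosure k)) (f i)))
        = eval a (MvPolynomial.map (algebraMap k (AlgebraicClosure k)) g)) :
    ∃ p : MvPolynomial (Fin m) k, ∃ ν : ℕ, ∀ b ∈ R,
      h b ^ χ ^ ν = eval b (MvPolynomial.map (algebraMap k (AlgebraicClosure k)) p) := by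
  subst hR
  have : Fact χ.Prime := ⟨(CharP.char_is_prime_or_zero k χ).resolve_right hχ.ne'⟩
  have : CharP (AlgebraicClosure k) χ :=
    charP_of_injective_algebraMap (algebraMap k _).injective χ
  obtain ⟨ν, A, B, hB, hAB⟩ := exists_pow_char_pow_mul_aeval_eq_aeval χ _ _
    fun a b hab => by rw [← hcomp, ← hcomp, funext hab]
  obtain ⟨P, hP⟩ := AlmostSurj.exists_aeval_eq_of_mul_aeval_eq hAS hB hAB
  obtain ⟨p, hp⟩ := exists_aeval_eq_of_map_eq_aeval_map f (g ^ χ ^ ν) P (by rw [hP, map_pow])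
  refine ⟨p, ν, ?_⟩
  rintro _ ⟨a, rfl⟩
  rw [hcomp, ← map_pow, ← map_pow (MvPolynomial.map _), ← hp, aeval_eq_bind₁, map_bind₁, ← aeval_eq_bind₁, eval_aeval]
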